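/- arXiv:2305.09413 — 2 statements merged into one kernel-verified Lean document; each statement's English description precedes it below -/
import Mathlib

section
/- Let H, K be complex Hilbert spaces, A : dom(A) ⊆ H → K and B : dom(B) ⊆ K → H densely defined closed linear operators, and A₀ ⊆ A, B₀ ⊆ B densely defined restrictions with A₀* = -B and B₀* = -A. Set BD(A) := {u ∈ dom(A) : A u ∈ dom(B), B(A u) = u} and BD(B) := {q ∈ dom(B) : B q ∈ dom(A), A(B q) = q}. Let q ∈ dom(B) be decomposed as q = q₀ + q₁ with q₀ ∈ dom(B₀) and q₁ ∈ BD(B), and let τ ∈ BD(A). Then the following are equivalent: (i) for every u ∈ dom(A) and every decomposition u = u₀ + u₁ with u₀ ∈ dom(A₀) and u₁ ∈ BD(A), one has ⟪q, A u⟫_K + ⟪τ, u₁⟫_H + ⟪A τ, A u₁⟫_K = -⟪B q, u⟫_H; (ii) τ = -B q₁. -/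
/-!
The two Green formulas `⟪q, A₀ u₀⟫ = -⟪B q, u₀⟫` and `⟪q₀, A u⟫ = -⟪B₀ q₀, u⟫`, read off from
`A₀* = -B` and `B₀* = -A`, say that the boundary form `⟪q, A u⟫ + ⟪B q, u⟫` vanishes as soon as
`q ∈ dom B₀` or `u ∈ dom A₀`. Hence it equals `⟪q₁, A u₁⟫ + ⟪B q₁, u₁⟫`, which for `q₁ ∈ BD(B)` is
the graph inner product of `B q₁ ∈ BD(A)` and `u₁`. So (i) says that `w = τ + B q₁` is
graph-orthogonal to `BD(A)`; since `w ∈ BD(A)` itself, testing with `u = u₁ = w` gives `w = 0`.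
-/

/-- The abstract boundary data space `BD(A) = {u ∈ dom(A) : A u ∈ dom(B), B (A u) = u}`,
as a subset of `dom(A)`. -/
def boundaryData {H K : Type*}
    [NormedAddCommGroup H] [InnerProductSpace ℂ H]
    [NormedAddCommGroup K] [InnerProductSpace ℂ K]
    (A : H →ₗ.[ℂ] K) (B : K →ₗ.[ℂ] H) : Set A.domain :=
  {u | ∃ h : A u ∈ B.domain, B ⟨A u, h⟩ = (u : H)}

open scoped InnerProductSpace

namespace LinearPMap

variable {𝕜 E F : Type*} [RCLike 𝕜]
  [NormedAddCommGroup E] [InnerProductSpace 𝕜 E] [NormedAddCommGroup F] [InnerProductSpace 𝕜 F]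

theorem inner_apply_eq_neg_of_adjoint_eq_neg [CompleteSpace E] {T : E →ₗ.[𝕜] F}
    {S : F →ₗ.[𝕜] E} (hT : Dense (T.domain : Set E)) (hTS : T.adjoint = -S)
    (y : S.domain) (x : T.domain) : ⟪(y : F), T x⟫_𝕜 = -⟪S y, (x : E)⟫_𝕜 := by
  have h := adjoint_isFormalAdjoint hT
  rw [hTS] at h
  rw [← h y x, neg_apply, inner_neg_left]

def graphInner (T : E →ₗ.[𝕜] F) (x y : T.domain) : 𝕜 :=
  ⟪(x : E), y⟫_𝕜 + ⟪T x, T y⟫_𝕜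

theorem graphInner_add_left (T : E →ₗ.[𝕜] F) (x x' y : T.domain) :
    T.graphInner (x + x') y = T.graphInner x y + T.graphInner x' y := by
  simp only [graphInner, Submodule.coe_add, map_add, inner_add_left]
  ring

theorem graphInner_zero_left (T : E →ₗ.[𝕜] F) (y : T.domain) : T.graphInner 0 y = 0 := by
  simp [graphInner]

theorem graphInner_self_eq_zero {T : E →ₗ.[𝕜] F} {x : T.domain} :
    T.graphInner x x = 0 ↔ x = 0 := by
  refine ⟨fun h => ?_, fun h => h ▸ T.graphInner_zero_left 0⟩
  have hnorm : ‖(x : E)‖ ^ 2 + ‖T x‖ ^ 2 = 0 := by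
    have := congrArg RCLike.re h
    rwa [graphInner, _root_.map_add, inner_self_eq_norm_sq, inner_self_eq_norm_sq,
      _root_.map_zero] at this
  have hx : ‖(x : E)‖ = 0 := by nlinarith [sq_nonneg ‖(x : E)‖, sq_nonneg ‖T x‖]
  exact Subtype.ext (norm_eq_zero.1 hx)

def boundaryForm (T : E →ₗ.[𝕜] F) (S : F →ₗ.[𝕜] E) (y : S.domain) (x : T.domain) : 𝕜 :=
  ⟪(y : F), T x⟫_𝕜 + ⟪S y, (x : E)⟫_𝕜

variable {T : E →ₗ.[𝕜] F} {S : F →ₗ.[𝕜] E}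

theorem boundaryForm_add_left (y y' : S.domain) (x : T.domain) :
    boundaryForm T S (y + y') x = boundaryForm T S y x + boundaryForm T S y' x := by
  simp only [boundaryForm, Submodule.coe_add, map_add, inner_add_left]
  ring

theorem boundaryForm_add_right (y : S.domain) (x x' : T.domain) :
    boundaryForm T S y (x + x') = boundaryForm T S y x + boundaryForm T S y x' := by
  simp only [boundaryForm, Submodule.coe_add, map_add, inner_add_right]
  ring

theorem boundaryForm_inclusion_right_eq_zero [CompleteSpace E] {T₀ : E →ₗ.[𝕜] F}
    (hT₀ : Dense (T₀.domain : Set E)) (hT₀T : T₀ ≤ T) (hT₀S : T₀.adjoint = -S)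
    (y : S.domain) (x₀ : T₀.domain) :
    boundaryForm T S y (Submodule.inclusion hT₀T.1 x₀) = 0 := by
  rw [boundaryForm, ← apply_comp_inclusion hT₀T, inner_apply_eq_neg_of_adjoint_eq_neg hT₀ hT₀S]
  exact neg_add_cancel _

theorem boundaryForm_inclusion_left_eq_zero [CompleteSpace F] {S₀ : F →ₗ.[𝕜] E}
    (hS₀ : Dense (S₀.domain : Set F)) (hS₀S : S₀ ≤ S) (hS₀T : S₀.adjoint = -T)
    (y₀ : S₀.domain) (x : T.domain) :
    boundaryForm T S (Submodule.inclusion hS₀S.1 y₀) x = 0 := by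
  have h := congrArg (starRingEnd 𝕜) (inner_apply_eq_neg_of_adjoint_eq_neg hS₀ hS₀T x y₀)
  rw [inner_conj_symm, _root_.map_neg, inner_conj_symm] at h
  rw [boundaryForm, ← apply_comp_inclusion hS₀S, Submodule.coe_inclusion, h]
  exact add_neg_cancel _

theorem boundaryForm_eq_of_add_eq [CompleteSpace E] [CompleteSpace F]
    {T₀ : E →ₗ.[𝕜] F} {S₀ : F →ₗ.[𝕜] E}
    (hT₀ : Dense (T₀.domain : Set E)) (hT₀T : T₀ ≤ T) (hT₀S : T₀.adjoint = -S)
    (hS₀ : Dense (S₀.domain : Set F)) (hS₀S : S₀ ≤ S) (hS₀T : S₀.adjoint = -T)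
    {y y₁ : S.domain} {y₀ : S₀.domain} (hy : (y : F) = y₀ + y₁)
    {x x₁ : T.domain} {x₀ : T₀.domain} (hx : (x : E) = x₀ + x₁) :
    boundaryForm T S y x = boundaryForm T S y₁ x₁ := by
  obtain rfl : y = Submodule.inclusion hS₀S.1 y₀ + y₁ := Subtype.ext hy
  obtain rfl : x = Submodule.inclusion hT₀T.1 x₀ + x₁ := Subtype.ext hx
  rw [boundaryForm_add_right, boundaryForm_inclusion_right_eq_zero hT₀ hT₀T hT₀S,
    boundaryForm_add_left, boundaryForm_inclusion_left_eq_zero hS₀ hS₀S hS₀T, zero_add, zero_add]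

end LinearPMap

section boundaryData

variable {H K : Type*} [NormedAddCommGroup H] [InnerProductSpace ℂ H]
  [NormedAddCommGroup K] [InnerProductSpace ℂ K] {A : H →ₗ.[ℂ] K} {B : K →ₗ.[ℂ] H}

theorem add_mem_boundaryData {u v : A.domain} (hu : u ∈ boundaryData A B)
    (hv : v ∈ boundaryData A B) : u + v ∈ boundaryData A B := by
  obtain ⟨hAu, hBAu⟩ := hu
  obtain ⟨hAv, hBAv⟩ := hv
  have hsum : A (u + v) = (⟨A u, hAu⟩ + ⟨A v, hAv⟩ : B.domain) := A.map_add u v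
  have hmem : A (u + v) ∈ B.domain := hsum ▸ Submodule.coe_mem _
  have hsum' : (⟨A (u + v), hmem⟩ : B.domain) = ⟨A u, hAu⟩ + ⟨A v, hAv⟩ := Subtype.ext hsum
  refine ⟨hmem, ?_⟩
  rw [hsum', B.map_add, hBAu, hBAv, Submodule.coe_add]

theorem mk_apply_mem_boundaryData {q : B.domain} (hq : q ∈ boundaryData B A) :
    (⟨B q, hq.fst⟩ : A.domain) ∈ boundaryData A B := by
  obtain ⟨_, hABq⟩ := hq
  refine ⟨by rw [hABq]; exact q.2, ?_⟩
  simp only [hABq]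

theorem boundaryForm_eq_graphInner {q : B.domain} (hq : q ∈ boundaryData B A) (u : A.domain) :
    LinearPMap.boundaryForm A B q u = A.graphInner ⟨B q, hq.fst⟩ u := by
  rw [LinearPMap.boundaryForm, LinearPMap.graphInner, hq.snd, add_comm]

end boundaryData

theorem stmt8_general {H K : Type*}
    [NormedAddCommGroup H] [InnerProductSpace ℂ H] [CompleteSpace H]
    [NormedAddCommGroup K] [InnerProductSpace ℂ K] [CompleteSpace K]
    (A A₀ : H →ₗ.[ℂ] K) (B B₀ : K →ₗ.[ℂ] H)
    (hA₀dense : Dense (A₀.domain : Set H)) (hA₀A : A₀ ≤ A)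
    (hB₀dense : Dense (B₀.domain : Set K)) (hB₀B : B₀ ≤ B)
    (hadj₁ : A₀.adjoint = -B) (hadj₂ : B₀.adjoint = -A)
    (q q₁ : B.domain) (q₀ : B₀.domain)
    (hq : (q : K) = (q₀ : K) + (q₁ : K)) (hq₁ : q₁ ∈ boundaryData B A)
    (τ : A.domain) (hτ : τ ∈ boundaryData A B) :
    (∀ (u u₁ : A.domain) (u₀ : A₀.domain), u₁ ∈ boundaryData A B →
        (u : H) = (u₀ : H) + (u₁ : H) →
        (inner ℂ (q : K) (A u) : ℂ) + inner ℂ (τ : H) (u₁ : H) + inner ℂ (A τ) (A u₁) =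
          -(inner ℂ (B q) (u : H) : ℂ)) ↔
      (τ : H) = -(B q₁) := by
  set w : A.domain := τ + ⟨B q₁, hq₁.fst⟩
  have hw : w ∈ boundaryData A B := add_mem_boundaryData hτ (mk_apply_mem_boundaryData hq₁)
  have key : ∀ (u u₁ : A.domain) (u₀ : A₀.domain), (u : H) = (u₀ : H) + (u₁ : H) →
      ((inner ℂ (q : K) (A u) : ℂ) + inner ℂ (τ : H) (u₁ : H) + inner ℂ (A τ) (A u₁) =
        -(inner ℂ (B q) (u : H) : ℂ) ↔ A.graphInner w u₁ = 0) := by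
    intro u u₁ u₀ hu
    have hform :=
      LinearPMap.boundaryForm_eq_of_add_eq hA₀dense hA₀A hadj₁ hB₀dense hB₀B hadj₂ hq hu
    rw [boundaryForm_eq_graphInner hq₁, LinearPMap.boundaryForm] at hform
    rw [LinearPMap.graphInner_add_left, ← hform, LinearPMap.graphInner]
    constructor <;> intro h <;> linear_combination h
  constructor
  · intro h
    have hw0 : w = 0 :=
      LinearPMap.graphInner_self_eq_zero.1 ((key w w 0 (by simp)).1 (h w w 0 hw (by simp)))
    exact eq_neg_of_add_eq_zero_left (congrArg Subtype.val hw0)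
  · intro hτq u u₁ u₀ _ hu
    have hw0 : w = 0 := Subtype.ext (by simp [w, hτq])
    rw [key u u₁ u₀ hu, hw0, LinearPMap.graphInner_zero_left]

/-- Characterization of the domain of the adjoint of the column operator
`(A; ι*_{BD(A)})`: with `A₀* = -B` and `B₀* = -A`, for `q = q₀ + q₁ ∈ dom(B)`
(`q₀ ∈ dom(B₀)`, `q₁ ∈ BD(B)`) and `τ ∈ BD(A)`, the adjoint relation (i) holds for all
decomposable `u ∈ dom(A)` iff `τ = -B q₁`. -/
theorem stmt8 {H K : Type*}
    [NormedAddCommGroup H] [InnerProductSpace ℂ H] [CompleteSpace H]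
    [NormedAddCommGroup K] [InnerProductSpace ℂ K] [CompleteSpace K]
    (A A₀ : H →ₗ.[ℂ] K) (B B₀ : K →ₗ.[ℂ] H)
    (hAdense : Dense (A.domain : Set H)) (hAclosed : A.IsClosed)
    (hBdense : Dense (B.domain : Set K)) (hBclosed : B.IsClosed)
    (hA₀dense : Dense (A₀.domain : Set H)) (hA₀A : A₀ ≤ A)
    (hB₀dense : Dense (B₀.domain : Set K)) (hB₀B : B₀ ≤ B)
    (hadj₁ : A₀.adjoint = -B) (hadj₂ : B₀.adjoint = -A)
    (q q₁ : B.domain) (q₀ : B₀.domain)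
    (hq : (q : K) = (q₀ : K) + (q₁ : K)) (hq₁ : q₁ ∈ boundaryData B A)
    (τ : A.domain) (hτ : τ ∈ boundaryData A B) :
    (∀ (u u₁ : A.domain) (u₀ : A₀.domain), u₁ ∈ boundaryData A B →
        (u : H) = (u₀ : H) + (u₁ : H) →
        (inner ℂ (q : K) (A u) : ℂ) + inner ℂ (τ : H) (u₁ : H) + inner ℂ (A τ) (A u₁) =
          -(inner ℂ (B q) (u : H) : ℂ)) ↔
      (τ : H) = -(B q₁) :=
  stmt8_general A A₀ B B₀ hA₀dense hA₀A hB₀dense hB₀B hadj₁ hadj₂ q q₁ q₀ hq hq₁ τ hτ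
end

section
/- Let H₁, H₂, H₃ be complex Hilbert spaces, β : H₁ → H₂, Q : H₂ → H₃, α : H₃ → H₃ bounded linear operators, and C : H₂ → H₂ a bounded skew-adjoint operator (C* = -C). Let ν > ‖α‖ and z ∈ ℂ with Re z ≥ ν, and define T(z) on H₁ ⊕ H₂ ⊕ H₃ by T(z)(x, y, w) := (x - β* y - β* Q* w, β x + y - C Q* w, Q β x - Q C y + w + z⁻¹·(α w)). Then T(z) is bijective with bounded inverse, ‖T(z)⁻¹‖ ≤ (1 - ‖α‖/ν)⁻¹, and Re⟪v, T(z)⁻¹ v⟫ ≥ (1 - ‖α‖/ν)·‖T(z)‖⁻²·‖v‖² for all v ∈ H₁ ⊕ H₂ ⊕ H₃. -/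
/-!
The off-diagonal part of `T(z)` is skew-adjoint (this is where `C* = -C` enters), so for
`v = (x, y, w)` one has `Re⟪v, T v⟫ = ‖v‖² + Re⟪w, z⁻¹ α w⟫ ≥ (1 - ‖α‖/ν) ‖v‖²`.
A coercive bounded operator on a Hilbert space is bounded below, hence injective with closed
range, and its range has trivial orthogonal complement, so it is invertible with
`‖T⁻¹‖ ≤ c⁻¹`. Finally, with `u = T⁻¹ v`, `Re⟪v, T⁻¹ v⟫ = Re⟪u, T u⟫ ≥ c ‖u‖² ≥ c ‖T‖⁻² ‖v‖²`.
-/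

open ContinuousLinearMap RCLike

namespace ContinuousLinearMap

variable {𝕜 E : Type*} [RCLike 𝕜] [NormedAddCommGroup E] [InnerProductSpace 𝕜 E]
  {T : E →L[𝕜] E} {c : ℝ}

theorem mul_norm_le_norm_apply_of_coercive (hT : ∀ v, c * ‖v‖ ^ 2 ≤ re (inner 𝕜 v (T v)))
    (v : E) : c * ‖v‖ ≤ ‖T v‖ := by
  rcases (norm_nonneg v).eq_or_lt with hv | hv
  · simp [← hv]
  · refine le_of_mul_le_mul_right ?_ hv
    calc c * ‖v‖ * ‖v‖ = c * ‖v‖ ^ 2 := by ring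
      _ ≤ re (inner 𝕜 v (T v)) := hT v
      _ ≤ ‖v‖ * ‖T v‖ := re_inner_le_norm v (T v)
      _ = ‖T v‖ * ‖v‖ := mul_comm _ _

theorem antilipschitzWith_of_coercive (hc : 0 < c)
    (hT : ∀ v, c * ‖v‖ ^ 2 ≤ re (inner 𝕜 v (T v))) :
    AntilipschitzWith ⟨c⁻¹, inv_nonneg.2 hc.le⟩ T :=
  T.antilipschitz_of_bound fun v => by
    change ‖v‖ ≤ c⁻¹ * ‖T v‖
    rw [← div_eq_inv_mul, le_div_iff₀' hc]
    exact mul_norm_le_norm_apply_of_coercive hT v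

theorem range_eq_top_of_coercive [CompleteSpace E] (hc : 0 < c)
    (hT : ∀ v, c * ‖v‖ ^ 2 ≤ re (inner 𝕜 v (T v))) : T.range = ⊤ := by
  have : CompleteSpace T.range :=
    ((antilipschitzWith_of_coercive hc hT).isClosed_range T.uniformContinuous).completeSpace_coe
  refine Submodule.orthogonal_eq_bot_iff.mp ((Submodule.eq_bot_iff _).mpr fun u hu => ?_)
  have h0 : inner 𝕜 (T u) u = 0 := (Submodule.mem_orthogonal _ u).mp hu _ ⟨u, rfl⟩
  have := hT u
  rw [inner_re_symm, h0, map_zero] at this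
  have hu2 : ‖u‖ ^ 2 ≤ 0 := nonpos_of_mul_nonpos_right this hc
  exact norm_eq_zero.mp (pow_eq_zero_iff two_ne_zero |>.mp (hu2.antisymm (sq_nonneg _)))

variable [CompleteSpace E]

noncomputable def equivOfCoercive (T : E →L[𝕜] E) (hc : 0 < c)
    (hT : ∀ v, c * ‖v‖ ^ 2 ≤ re (inner 𝕜 v (T v))) : E ≃L[𝕜] E :=
  .ofBijective T
    (LinearMap.ker_eq_bot.mpr (antilipschitzWith_of_coercive hc hT).injective)
    (range_eq_top_of_coercive hc hT)

variable (hc : 0 < c) (hT : ∀ v, c * ‖v‖ ^ 2 ≤ re (inner 𝕜 v (T v)))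
include hc hT

theorem apply_equivOfCoercive_symm (v : E) : T ((T.equivOfCoercive hc hT).symm v) = v :=
  (T.equivOfCoercive hc hT).apply_symm_apply v

theorem norm_equivOfCoercive_symm_le :
    ‖((T.equivOfCoercive hc hT).symm : E →L[𝕜] E)‖ ≤ c⁻¹ :=
  opNorm_le_bound _ (inv_nonneg.2 hc.le) fun v => by
    rw [← div_eq_inv_mul, le_div_iff₀' hc]
    simpa only [ContinuousLinearEquiv.coe_coe, apply_equivOfCoercive_symm hc hT] using
      mul_norm_le_norm_apply_of_coercive hT ((T.equivOfCoercive hc hT).symm v)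

theorem re_inner_equivOfCoercive_symm (v : E) :
    c * (‖T‖ ^ 2)⁻¹ * ‖v‖ ^ 2 ≤ re (inner 𝕜 v ((T.equivOfCoercive hc hT).symm v)) := by
  set u := (T.equivOfCoercive hc hT).symm v
  have hTu : T u = v := apply_equivOfCoercive_symm hc hT v
  have hv : ‖v‖ ^ 2 ≤ ‖u‖ ^ 2 * ‖T‖ ^ 2 := by
    rw [← mul_pow, mul_comm, ← hTu]
    gcongr
    exact T.le_opNorm u
  calc c * (‖T‖ ^ 2)⁻¹ * ‖v‖ ^ 2 = c * (‖v‖ ^ 2 / ‖T‖ ^ 2) := by ring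
    _ ≤ c * ‖u‖ ^ 2 := by gcongr; exact div_le_of_le_mul₀ (by positivity) (by positivity) hv
    _ ≤ re (inner 𝕜 u (T u)) := hT u
    _ = re (inner 𝕜 v u) := by rw [hTu, inner_re_symm]

end ContinuousLinearMap

theorem re_inner_adjoint_apply_right {𝕜 E F : Type*} [RCLike 𝕜]
    [NormedAddCommGroup E] [InnerProductSpace 𝕜 E] [CompleteSpace E]
    [NormedAddCommGroup F] [InnerProductSpace 𝕜 F] [CompleteSpace F]
    (A : E →L[𝕜] F) (x : E) (y : F) : re (inner 𝕜 x (adjoint A y)) = re (inner 𝕜 y (A x)) := by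
  rw [adjoint_inner_right, inner_re_symm]

theorem Complex.norm_inv_le_inv_of_le_re {z : ℂ} {ν : ℝ} (hν : 0 < ν) (hz : ν ≤ z.re) :
    ‖z⁻¹‖ ≤ ν⁻¹ := by
  rw [norm_inv]
  exact inv_anti₀ hν (hz.trans (Complex.re_le_norm z))

theorem neg_div_mul_sq_le_re_inner_inv_smul {H : Type*} [NormedAddCommGroup H]
    [InnerProductSpace ℂ H] (α : H →L[ℂ] H) {z : ℂ} {ν : ℝ} (hν : 0 < ν) (hz : ν ≤ z.re)
    (w : H) : -(‖α‖ / ν * ‖w‖ ^ 2) ≤ re (inner ℂ w (z⁻¹ • α w)) := by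
  have hαw : ‖z⁻¹ • α w‖ ≤ ν⁻¹ * (‖α‖ * ‖w‖) := by
    rw [norm_smul]
    gcongr
    · exact Complex.norm_inv_le_inv_of_le_re hν hz
    · exact α.le_opNorm w
  calc -(‖α‖ / ν * ‖w‖ ^ 2) ≤ -(‖w‖ * ‖z⁻¹ • α w‖) := by
        rw [neg_le_neg_iff]
        calc ‖w‖ * ‖z⁻¹ • α w‖ ≤ ‖w‖ * (ν⁻¹ * (‖α‖ * ‖w‖)) := by gcongr
          _ = ‖α‖ / ν * ‖w‖ ^ 2 := by ring
    _ ≤ re (inner ℂ w (z⁻¹ • α w)) := by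
        simpa only [inner_neg_right, map_neg, norm_neg, neg_le] using
          re_inner_le_norm (𝕜 := ℂ) w (-(z⁻¹ • α w))

theorem WithLp.norm_toLp_toLp_sq {E F G : Type*} [SeminormedAddCommGroup E]
    [SeminormedAddCommGroup F] [SeminormedAddCommGroup G] (x : E) (y : F) (w : G) :
    ‖WithLp.toLp 2 (x, WithLp.toLp 2 (y, w))‖ ^ 2 = ‖x‖ ^ 2 + ‖y‖ ^ 2 + ‖w‖ ^ 2 := by
  rw [WithLp.prod_norm_sq_eq_of_L2, WithLp.prod_norm_sq_eq_of_L2, add_assoc]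
  rfl

section ImpedanceBlock

variable {H₁ H₂ H₃ : Type*}
  [NormedAddCommGroup H₁] [InnerProductSpace ℂ H₁] [CompleteSpace H₁]
  [NormedAddCommGroup H₂] [InnerProductSpace ℂ H₂] [CompleteSpace H₂]
  [NormedAddCommGroup H₃] [InnerProductSpace ℂ H₃] [CompleteSpace H₃]

theorem re_inner_impedanceBlock (β : H₁ →L[ℂ] H₂) (Q : H₂ →L[ℂ] H₃) (C : H₂ →L[ℂ] H₂)
    (hC : adjoint C = -C) (u : H₃) (x : H₁) (y : H₂) (w : H₃) :
    re (inner ℂ (WithLp.toLp 2 (x, WithLp.toLp 2 (y, w)))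
      (WithLp.toLp 2 (x - adjoint β y - adjoint β (adjoint Q w),
        WithLp.toLp 2 (β x + y - C (adjoint Q w), Q (β x) - Q (C y) + w + u)))) =
      ‖x‖ ^ 2 + ‖y‖ ^ 2 + ‖w‖ ^ 2 + re (inner ℂ w u) := by
  have hskew : re (inner ℂ w (Q (C y))) = -re (inner ℂ y (C (adjoint Q w))) := by
    rw [← re_inner_adjoint_apply_right Q, ← re_inner_adjoint_apply_right C, hC, neg_apply,
      inner_neg_right, map_neg, neg_neg, inner_re_symm]
  simp only [WithLp.prod_inner_apply, inner_sub_right, adjoint_inner_left, inner_add_right,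
    map_add, map_sub, re_inner_adjoint_apply_right, hskew, inner_self_eq_norm_sq]
  ring

theorem impedanceBlock_coercive (β : H₁ →L[ℂ] H₂) (Q : H₂ →L[ℂ] H₃) (α : H₃ →L[ℂ] H₃)
    (C : H₂ →L[ℂ] H₂) (hC : adjoint C = -C) {ν : ℝ} (hν : ‖α‖ < ν) {z : ℂ} (hz : ν ≤ z.re)
    (T : WithLp 2 (H₁ × WithLp 2 (H₂ × H₃)) →L[ℂ] WithLp 2 (H₁ × WithLp 2 (H₂ × H₃)))
    (hT : ∀ (x : H₁) (y : H₂) (w : H₃),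
      T (WithLp.toLp 2 (x, WithLp.toLp 2 (y, w))) =
        WithLp.toLp 2 (x - adjoint β y - adjoint β (adjoint Q w),
          WithLp.toLp 2 (β x + y - C (adjoint Q w), Q (β x) - Q (C y) + w + z⁻¹ • α w)))
    (v : WithLp 2 (H₁ × WithLp 2 (H₂ × H₃))) :
    (1 - ‖α‖ / ν) * ‖v‖ ^ 2 ≤ re (inner ℂ v (T v)) := by
  obtain ⟨x, y, w⟩ := v
  have hν0 : 0 < ν := (norm_nonneg α).trans_lt hν
  have hαw := neg_div_mul_sq_le_re_inner_inv_smul α hν0 hz w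
  have : 0 ≤ ‖α‖ / ν := by positivity
  rw [hT, re_inner_impedanceBlock β Q C hC, WithLp.norm_toLp_toLp_sq]
  nlinarith [sq_nonneg ‖x‖, sq_nonneg ‖y‖]

end ImpedanceBlock

/-- Let `T(z)` be the block impedance operator
`[[1, -β*, -β*Q*], [β, 1, -C Q*], [Qβ, -QC, 1 + α z⁻¹]]` on the Hilbert direct sum
`H₁ ⊕₂ H₂ ⊕₂ H₃`, with `C` skew-adjoint, `ν > ‖α‖` and `Re z ≥ ν`.  Then `T(z)` is
bijective with bounded inverse, `‖T(z)⁻¹‖ ≤ (1 - ‖α‖/ν)⁻¹`, and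
`Re⟪v, T(z)⁻¹ v⟫ ≥ (1 - ‖α‖/ν)‖T(z)‖⁻²‖v‖²` for all `v`. -/
theorem stmt11 {H₁ H₂ H₃ : Type*}
    [NormedAddCommGroup H₁] [InnerProductSpace ℂ H₁] [CompleteSpace H₁]
    [NormedAddCommGroup H₂] [InnerProductSpace ℂ H₂] [CompleteSpace H₂]
    [NormedAddCommGroup H₃] [InnerProductSpace ℂ H₃] [CompleteSpace H₃]
    (β : H₁ →L[ℂ] H₂) (Q : H₂ →L[ℂ] H₃) (α : H₃ →L[ℂ] H₃) (C : H₂ →L[ℂ] H₂)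
    (hC : ContinuousLinearMap.adjoint C = -C)
    (ν : ℝ) (hν : ‖α‖ < ν) (z : ℂ) (hz : ν ≤ z.re)
    (T : WithLp 2 (H₁ × WithLp 2 (H₂ × H₃)) →L[ℂ] WithLp 2 (H₁ × WithLp 2 (H₂ × H₃)))
    (hT : ∀ (x : H₁) (y : H₂) (w : H₃),
      T ((WithLp.equiv 2 (H₁ × WithLp 2 (H₂ × H₃))).symm
          (x, (WithLp.equiv 2 (H₂ × H₃)).symm (y, w))) =
        (WithLp.equiv 2 (H₁ × WithLp 2 (H₂ × H₃))).symm
          (x - (ContinuousLinearMap.adjoint β) y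
              - (ContinuousLinearMap.adjoint β) ((ContinuousLinearMap.adjoint Q) w),
            (WithLp.equiv 2 (H₂ × H₃)).symm
              (β x + y - C ((ContinuousLinearMap.adjoint Q) w),
                Q (β x) - Q (C y) + w + z⁻¹ • α w))) :
    Function.Bijective T ∧
      ∃ S : WithLp 2 (H₁ × WithLp 2 (H₂ × H₃)) →L[ℂ] WithLp 2 (H₁ × WithLp 2 (H₂ × H₃)),
        (∀ v, S (T v) = v) ∧ (∀ v, T (S v) = v) ∧
        ‖S‖ ≤ (1 - ‖α‖ / ν)⁻¹ ∧
        ∀ v, (1 - ‖α‖ / ν) * (‖T‖ ^ 2)⁻¹ * ‖v‖ ^ 2 ≤ (inner ℂ v (S v) : ℂ).re := by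
  have hc : 0 < 1 - ‖α‖ / ν := sub_pos.2 ((div_lt_one ((norm_nonneg α).trans_lt hν)).2 hν)
  have hcoer := impedanceBlock_coercive β Q α C hC hν hz T hT
  set e := T.equivOfCoercive hc hcoer
  refine ⟨e.bijective, e.symm, e.symm_apply_apply, e.apply_symm_apply,
    norm_equivOfCoercive_symm_le hc hcoer, fun v => ?_⟩
  simpa only [RCLike.re_to_complex, ContinuousLinearEquiv.coe_coe] using
    re_inner_equivOfCoercive_symm hc hcoer v
end
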